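/- arXiv:1408.5951 — 6 statements merged into one kernel-verified Lean document; each statement's English description precedes it below -/
import Mathlib

section
/- Let f(x) = r̄(x)(1-p(x)) - k·p(x) where r̄ is twice continuously differentiable, decreasing, concave, and positive on an open interval I ⊆ (0,1), p is twice continuously differentiable, convex, strictly increasing on I, k ≥ 0, and suppose f(x) > 0 and f'(x) < 0 for all x ∈ I. Define g(x) = -α·f(x)/f'(x) for a fixed α ∈ (0,1]. Then g is strictly decreasing on I. -/
/-!
Writing `f = r (1 - p) - k p`, the derivative of `g = -α f / f'` is `-α (f'² - f f'') / f'²`,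
so it suffices that `f'² > f f''`. With `A = -r' (1 - p) ≥ 0` and `B = (r + k) p' ≥ 0` we have
`f' = -(A + B)`, while the signs of `r''`, `p''` give `f'' ≤ -2 r' p'`; since
`0 < f ≤ (r + k)(1 - p)` this yields `f f'' ≤ 2AB < (A + B)² = f'²`.
-/

open Set Filter Topology

section DerivSign

variable {g : ℝ → ℝ} {s : Set ℝ} {x : ℝ}

theorem MonotoneOn.deriv_nonneg_of_mem_nhds (hg : MonotoneOn g s) (hs : s ∈ 𝓝 x) :
    0 ≤ deriv g x := by
  rw [← derivWithin_of_mem_nhds hs]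
  exact hg.derivWithin_nonneg

theorem AntitoneOn.deriv_nonpos_of_mem_nhds (hg : AntitoneOn g s) (hs : s ∈ 𝓝 x) :
    deriv g x ≤ 0 := by
  rw [← derivWithin_of_mem_nhds hs]
  exact hg.derivWithin_nonpos

theorem ConvexOn.deriv_deriv_nonneg (hg : ConvexOn ℝ s g)
    (hd : ∀ y ∈ s, DifferentiableAt ℝ g y) (hs : s ∈ 𝓝 x) : 0 ≤ deriv (deriv g) x :=
  (hg.monotoneOn_deriv hd).deriv_nonneg_of_mem_nhds hs

theorem ConcaveOn.deriv_deriv_nonpos (hg : ConcaveOn ℝ s g)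
    (hd : ∀ y ∈ s, DifferentiableAt ℝ g y) (hs : s ∈ 𝓝 x) : deriv (deriv g) x ≤ 0 :=
  (hg.antitoneOn_deriv hd).deriv_nonpos_of_mem_nhds hs

theorem ContDiffOn.differentiableAt_deriv (hg : ContDiffOn ℝ 2 g s) (hs : IsOpen s)
    (hx : x ∈ s) : DifferentiableAt ℝ (deriv g) x :=
  ((hg.deriv_of_isOpen hs (by norm_num : (1 : WithTop ℕ∞) + 1 ≤ 2)).contDiffAt
    (hs.mem_nhds hx)).differentiableAt one_ne_zero

end DerivSign

theorem strictAntiOn_neg_mul_div_deriv {f f₂ : ℝ → ℝ} {s : Set ℝ} {α : ℝ} (hs : Convex ℝ s)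
    (hso : IsOpen s) (hα : 0 < α) (hf₂ : ∀ x ∈ s, HasDerivAt (deriv f) (f₂ x) x)
    (hf' : ∀ x ∈ s, deriv f x ≠ 0) (hkey : ∀ x ∈ s, f x * f₂ x < deriv f x ^ 2) :
    StrictAntiOn (fun x => -α * f x / deriv f x) s := by
  have hg : ∀ x ∈ s, HasDerivAt (fun x => -α * f x / deriv f x)
      ((-α * deriv f x * deriv f x - -α * f x * f₂ x) / deriv f x ^ 2) x := fun x hx =>
    ((differentiableAt_of_deriv_ne_zero (hf' x hx)).hasDerivAt.const_mul (-α)).div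
      (hf₂ x hx) (hf' x hx)
  refine strictAntiOn_of_deriv_neg hs
    (fun x hx => (hg x hx).continuousAt.continuousWithinAt) fun x hx => ?_
  rw [hso.interior_eq] at hx
  rw [(hg x hx).deriv]
  refine div_neg_of_neg_of_pos ?_ (pow_two_pos_of_ne_zero (hf' x hx))
  nlinarith [hkey x hx]

theorem fragile_mul_deriv2_lt_deriv_sq {r p k r₁ p₁ r₂ p₂ : ℝ} (hr : 0 < r) (hk : 0 ≤ k)
    (hr₁ : r₁ ≤ 0) (hp₁ : 0 ≤ p₁) (hr₂ : r₂ ≤ 0) (hp₂ : 0 ≤ p₂)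
    (hf : 0 < r * (1 - p) - k * p) (hf' : r₁ * (1 - p) - (r + k) * p₁ < 0) :
    (r * (1 - p) - k * p) * (r₂ * (1 - p) - 2 * r₁ * p₁ - (r + k) * p₂) <
      (r₁ * (1 - p) - (r + k) * p₁) ^ 2 := by
  have hq : 0 < 1 - p := by
    by_contra! hq
    nlinarith [mul_nonpos_of_nonneg_of_nonpos hr.le hq]
  have hA : 0 ≤ -r₁ * (1 - p) := mul_nonneg (neg_nonneg.2 hr₁) hq.le
  have hB : 0 ≤ (r + k) * p₁ := mul_nonneg (by linarith) hp₁
  have hf₂ : r₂ * (1 - p) - 2 * r₁ * p₁ - (r + k) * p₂ ≤ -2 * r₁ * p₁ := by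
    nlinarith [mul_nonpos_of_nonpos_of_nonneg hr₂ hq.le, mul_nonneg (by linarith : 0 ≤ r + k) hp₂]
  calc (r * (1 - p) - k * p) * (r₂ * (1 - p) - 2 * r₁ * p₁ - (r + k) * p₂)
      ≤ (r * (1 - p) - k * p) * (-2 * r₁ * p₁) := mul_le_mul_of_nonneg_left hf₂ hf.le
    _ ≤ (r + k) * (1 - p) * (-2 * r₁ * p₁) :=
        mul_le_mul_of_nonneg_right (by nlinarith) (by nlinarith)
    _ = 2 * (-r₁ * (1 - p)) * ((r + k) * p₁) := by ring
    _ < (-r₁ * (1 - p)) ^ 2 + 2 * (-r₁ * (1 - p)) * ((r + k) * p₁) + ((r + k) * p₁) ^ 2 := by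
        nlinarith [mul_pos (neg_pos.2 hf') (neg_pos.2 hf'), mul_nonneg hA hB]
    _ = (r₁ * (1 - p) - (r + k) * p₁) ^ 2 := by ring

section FragileDeriv

variable {r p : ℝ → ℝ} {k x : ℝ}

theorem hasDerivAt_fragile (hr : DifferentiableAt ℝ r x) (hp : DifferentiableAt ℝ p x) :
    HasDerivAt (fun y => r y * (1 - p y) - k * p y)
      (deriv r x * (1 - p x) - (r x + k) * deriv p x) x :=
  ((hr.hasDerivAt.mul (hp.hasDerivAt.const_sub 1)).sub
    (hp.hasDerivAt.const_mul k)).congr_deriv (by ring)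

theorem hasDerivAt_deriv_fragile (hr : ∀ᶠ y in 𝓝 x, DifferentiableAt ℝ r y)
    (hp : ∀ᶠ y in 𝓝 x, DifferentiableAt ℝ p y) (hr₁ : DifferentiableAt ℝ (deriv r) x)
    (hp₁ : DifferentiableAt ℝ (deriv p) x) :
    HasDerivAt (deriv fun y => r y * (1 - p y) - k * p y)
      (deriv (deriv r) x * (1 - p x) - 2 * deriv r x * deriv p x
        - (r x + k) * deriv (deriv p) x) x := by
  have hderiv : (deriv fun y => r y * (1 - p y) - k * p y) =ᶠ[𝓝 x]
      fun y => deriv r y * (1 - p y) - (r y + k) * deriv p y := by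
    filter_upwards [hr, hp] with y hry hpy using (hasDerivAt_fragile hry hpy).deriv
  refine HasDerivAt.congr_of_eventuallyEq ?_ hderiv
  exact ((hr₁.hasDerivAt.mul (hp.self_of_nhds.hasDerivAt.const_sub 1)).sub
    ((hr.self_of_nhds.hasDerivAt.add_const k).mul hp₁.hasDerivAt)).congr_deriv (by ring)

end FragileDeriv

theorem stmt2_general (r p f g : ℝ → ℝ) (k α a b : ℝ)
    (hr_diff : ContDiffOn ℝ 2 r (Set.Ioo a b))
    (hr_anti : AntitoneOn r (Set.Ioo a b))
    (hr_conc : ConcaveOn ℝ (Set.Ioo a b) r)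
    (hr_pos : ∀ x ∈ Set.Ioo a b, 0 < r x)
    (hp_diff : ContDiffOn ℝ 2 p (Set.Ioo a b))
    (hp_conv : ConvexOn ℝ (Set.Ioo a b) p)
    (hp_mono : StrictMonoOn p (Set.Ioo a b))
    (hk : 0 ≤ k)
    (hα : α ∈ Set.Ioc (0:ℝ) 1)
    (hf : ∀ x, f x = r x * (1 - p x) - k * p x)
    (hfpos : ∀ x ∈ Set.Ioo a b, 0 < f x)
    (hf' : ∀ x ∈ Set.Ioo a b, deriv f x < 0)
    (hg : ∀ x, g x = -α * f x / deriv f x) :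
    StrictAntiOn g (Set.Ioo a b) := by
  obtain rfl : f = fun y => r y * (1 - p y) - k * p y := funext hf
  obtain rfl : g = _ := funext hg
  have hnhds : ∀ x ∈ Ioo a b, Ioo a b ∈ 𝓝 x := fun x hx => isOpen_Ioo.mem_nhds hx
  have hr₁ : ∀ x ∈ Ioo a b, DifferentiableAt ℝ r x := fun x hx =>
    (hr_diff.contDiffAt (hnhds x hx)).differentiableAt two_ne_zero
  have hp₁ : ∀ x ∈ Ioo a b, DifferentiableAt ℝ p x := fun x hx =>
    (hp_diff.contDiffAt (hnhds x hx)).differentiableAt two_ne_zero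
  refine strictAntiOn_neg_mul_div_deriv (convex_Ioo a b) isOpen_Ioo hα.1
    (f₂ := fun x => deriv (deriv r) x * (1 - p x) - 2 * deriv r x * deriv p x
      - (r x + k) * deriv (deriv p) x) (fun x hx => ?_) (fun x hx => (hf' x hx).ne)
    (fun x hx => ?_)
  · exact hasDerivAt_deriv_fragile (eventually_of_mem (hnhds x hx) hr₁)
      (eventually_of_mem (hnhds x hx) hp₁) (hr_diff.differentiableAt_deriv isOpen_Ioo hx)
      (hp_diff.differentiableAt_deriv isOpen_Ioo hx)
  · have hderiv := (hasDerivAt_fragile (k := k) (hr₁ x hx) (hp₁ x hx)).deriv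
    have hf'x := hf' x hx
    rw [hderiv] at hf'x ⊢
    exact fragile_mul_deriv2_lt_deriv_sq (hr_pos x hx) hk
      (hr_anti.deriv_nonpos_of_mem_nhds (hnhds x hx))
      (hp_mono.monotoneOn.deriv_nonneg_of_mem_nhds (hnhds x hx))
      (hr_conc.deriv_deriv_nonpos hr₁ (hnhds x hx)) (hp_conv.deriv_deriv_nonneg hp₁ (hnhds x hx))
      (hfpos x hx) hf'x

theorem stmt2 (r p f g : ℝ → ℝ) (k α a b : ℝ)
    (hI : Set.Ioo a b ⊆ Set.Ioo (0:ℝ) 1)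
    (hr_diff : ContDiffOn ℝ 2 r (Set.Ioo a b))
    (hr_anti : AntitoneOn r (Set.Ioo a b))
    (hr_conc : ConcaveOn ℝ (Set.Ioo a b) r)
    (hr_pos : ∀ x ∈ Set.Ioo a b, 0 < r x)
    (hp_diff : ContDiffOn ℝ 2 p (Set.Ioo a b))
    (hp_conv : ConvexOn ℝ (Set.Ioo a b) p)
    (hp_mono : StrictMonoOn p (Set.Ioo a b))
    (hk : 0 ≤ k)
    (hα : α ∈ Set.Ioc (0:ℝ) 1)
    (hf : ∀ x, f x = r x * (1 - p x) - k * p x)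
    (hfpos : ∀ x ∈ Set.Ioo a b, 0 < f x)
    (hf' : ∀ x ∈ Set.Ioo a b, deriv f x < 0)
    (hg : ∀ x, g x = -α * f x / deriv f x) :
    StrictAntiOn g (Set.Ioo a b) :=
  stmt2_general r p f g k α a b hr_diff hr_anti hr_conc hr_pos hp_diff hp_conv hp_mono hk hα hf
    hfpos hf' hg
end

section
/- Let f:[0,1]→ℝ be continuous with f(x) > 0 and g(x) = -α f(x)/f'(x) strictly decreasing and positive on an interval I = (a, ȳ) where f(ȳ) = 0, and for each n let x_n ∈ I satisfy x_n = n·g(x_n). Then x_n → ȳ as n → ∞. -/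
open Filter Set

/-- If `x n = n * g (x n)` with `g` antitone, then `x n ≤ c` would force `x n ≥ n * g c`, which
outgrows any upper bound on `x` once `g c > 0`. -/
lemma eventually_lt_of_eq_natCast_mul {g : ℝ → ℝ} {s : Set ℝ} {x : ℕ → ℝ} {b c : ℝ}
    (hg : AntitoneOn g s) (hc : c ∈ s) (hgc : 0 < g c)
    (hx : ∀ᶠ n in atTop, x n ∈ s ∧ x n ≤ b ∧ x n = n * g (x n)) :
    ∀ᶠ n in atTop, c < x n := by
  have hgrow : ∀ᶠ n : ℕ in atTop, b < n * g c :=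
    (tendsto_natCast_atTop_atTop.atTop_mul_const hgc).eventually_gt_atTop b
  filter_upwards [hx, hgrow] with n ⟨hxs, hxb, hfix⟩ hn
  by_contra! hle
  have : (n : ℝ) * g c ≤ x n := by
    rw [hfix]
    exact mul_le_mul_of_nonneg_left (hg hxs hc hle) n.cast_nonneg
  linarith

theorem stmt5_general (g : ℝ → ℝ) (a ybar : ℝ) (x : ℕ → ℝ)
    (hg_anti : StrictAntiOn g (Set.Ioo a ybar))
    (hg_pos : ∀ y ∈ Set.Ioo a ybar, 0 < g y)
    (hx : ∀ n : ℕ, 1 ≤ n → x n ∈ Set.Ioo a ybar ∧ x n = (n : ℝ) * g (x n)) :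
    Filter.Tendsto x Filter.atTop (nhds ybar) := by
  have hev : ∀ᶠ n in atTop, x n ∈ Ioo a ybar ∧ x n = n * g (x n) := eventually_atTop.2 ⟨1, hx⟩
  have hab : a < ybar := (hx 1 le_rfl).1.1.trans (hx 1 le_rfl).1.2
  refine tendsto_order.2 ⟨fun b hb => ?_, fun b hb => hev.mono fun n hn => hn.1.2.trans hb⟩
  obtain ⟨c, hbc, hcy⟩ := exists_between (max_lt hab hb)
  have hc : c ∈ Ioo a ybar := ⟨(le_max_left a b).trans_lt hbc, hcy⟩
  have hcx := eventually_lt_of_eq_natCast_mul hg_anti.antitoneOn hc (hg_pos c hc)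
    (hev.mono fun n hn => ⟨hn.1, hn.1.2.le, hn.2⟩)
  exact hcx.mono fun n hn => ((le_max_right a b).trans_lt hbc).trans hn

theorem stmt5 (f g : ℝ → ℝ) (α a ybar : ℝ) (x : ℕ → ℝ)
    (hcont : ContinuousOn f (Set.Icc 0 1))
    (hI : Set.Ioo a ybar ⊆ Set.Icc (0:ℝ) 1)
    (hfpos : ∀ y ∈ Set.Ioo a ybar, 0 < f y)
    (hg : ∀ y, g y = -α * f y / deriv f y)
    (hg_anti : StrictAntiOn g (Set.Ioo a ybar))
    (hg_pos : ∀ y ∈ Set.Ioo a ybar, 0 < g y)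
    (hybar : f ybar = 0)
    (hx : ∀ n : ℕ, 1 ≤ n → x n ∈ Set.Ioo a ybar ∧ x n = (n : ℝ) * g (x n)) :
    Filter.Tendsto x Filter.atTop (nhds ybar) :=
  stmt5_general g a ybar x hg_anti hg_pos hx
end

section
/- Let p:[0,1]→[0,1] be convex, strictly increasing, differentiable, with p(1)=1, let α ∈ (0,1], k ≥ 0, a ≤ 0, b > 0 with a·x+b > 0 on [0,1]. Define f(x) = (a·x+b)(1-p(x)) - k·p(x). Let x₀ ∈ (0,1) satisfy x₀·f'(x₀) + α·f(x₀) = 0 with f(x₀) > 0 (the single-player optimality condition), and let ȳ satisfy f(ȳ) = 0 with f > 0 on [x₀, ȳ). Then ȳ < x₀·(1 + 2/α). -/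
/-!
Write `f x = g x * (1 - p x) - k` with `g x = a x + b + k`, which is positive and nonincreasing.
Multiplying the first-order condition at `x₀` by `ȳ - x₀` splits `α f(x₀) (ȳ - x₀)` into
`x₀ g(x₀) p'(x₀) (ȳ - x₀)` and `x₀ (-a) (ȳ - x₀) (1 - p x₀)`. Convexity of `p` bounds the
tangent increment `p'(x₀) (ȳ - x₀)` by `p ȳ - p x₀`, and since `f ȳ = 0` pins `k` down as
`g ȳ (1 - p ȳ)`, each of the two terms is at most `x₀ f(x₀)`, the second one strictly.
Hence `α (ȳ - x₀) < 2 x₀`.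
-/

open Set

theorem ConvexOn.deriv_mul_sub_le {S : Set ℝ} {p : ℝ → ℝ} {x y : ℝ} (hpc : ConvexOn ℝ S p)
    (hx : x ∈ S) (hy : y ∈ S) (hxy : x < y) (hp : DifferentiableAt ℝ p x) :
    deriv p x * (y - x) ≤ p y - p x := by
  have h := hpc.deriv_le_slope hx hy hxy hp
  rwa [slope_def_field, le_div_iff₀ (sub_pos.2 hxy)] at h

section FragileRate

variable {f p : ℝ → ℝ} {a b k x y : ℝ}

theorem hasDerivAt_of_eq_affine_mul_one_sub
    (hf : ∀ x, f x = (a * x + b) * (1 - p x) - k * p x) (hp : DifferentiableAt ℝ p x) :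
    HasDerivAt f (a * (1 - p x) - (a * x + b + k) * deriv p x) x := by
  obtain rfl : f = fun x => (a * x + b) * (1 - p x) - k * p x := funext hf
  have hg : HasDerivAt (fun x => a * x + b) a x := by
    simpa using ((hasDerivAt_id x).const_mul a).add_const b
  exact ((hg.mul (hp.hasDerivAt.const_sub 1)).sub
    (hp.hasDerivAt.const_mul k)).congr_deriv (by ring)

theorem one_sub_nonneg_of_apply_eq_zero
    (hf : ∀ x, f x = (a * x + b) * (1 - p x) - k * p x) (hk : 0 ≤ k) (hy : 0 < a * y + b)
    (hfy : f y = 0) : 0 ≤ 1 - p y := by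
  have hky : (a * y + b + k) * (1 - p y) = k := by linarith [hf y]
  exact nonneg_of_mul_nonneg_right (hky ▸ hk) (by linarith)

theorem mul_tangent_increment_le
    (hf : ∀ x, f x = (a * x + b) * (1 - p x) - k * p x) (ha : a ≤ 0) (hk : 0 ≤ k)
    (hxy : x ≤ y) (hy : 0 < a * y + b) (hfy : f y = 0) {d : ℝ}
    (hd : d * (y - x) ≤ p y - p x) :
    (a * x + b + k) * (d * (y - x)) ≤ f x := by
  have hqy := one_sub_nonneg_of_apply_eq_zero hf hk hy hfy
  have hgxy : a * y + b + k ≤ a * x + b + k := by linarith [mul_le_mul_of_nonpos_left hxy ha]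
  calc (a * x + b + k) * (d * (y - x))
      ≤ (a * x + b + k) * (p y - p x) := mul_le_mul_of_nonneg_left hd (by linarith)
    _ = (a * x + b + k) * (1 - p x) - (a * x + b + k) * (1 - p y) := by ring
    _ ≤ (a * x + b + k) * (1 - p x) - (a * y + b + k) * (1 - p y) := by
      gcongr
    _ = f x := by linarith [hf x, hf y]

theorem neg_mul_sub_mul_one_sub_lt
    (hf : ∀ x, f x = (a * x + b) * (1 - p x) - k * p x) (hk : 0 ≤ k) (hy : 0 < a * y + b)
    (hfy : f y = 0) (hpxy : p x < p y) :
    -a * (y - x) * (1 - p x) < f x := by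
  have hgy : 0 < a * y + b + k := by linarith
  calc -a * (y - x) * (1 - p x)
      = (a * x + b + k) * (1 - p x) - (a * y + b + k) * (1 - p x) := by ring
    _ < (a * x + b + k) * (1 - p x) - (a * y + b + k) * (1 - p y) := by
      gcongr
    _ = f x := by linarith [hf x, hf y]

end FragileRate

theorem stmt6_general (p f : ℝ → ℝ) (α k a b x₀ ybar : ℝ)
    (hp_conv : ConvexOn ℝ (Set.Icc 0 1) p)
    (hp_mono : StrictMonoOn p (Set.Icc 0 1))
    (hp_diff : ∀ x ∈ Set.Icc (0:ℝ) 1, DifferentiableAt ℝ p x)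
    (hα : α ∈ Set.Ioc (0:ℝ) 1) (hk : 0 ≤ k) (ha : a ≤ 0)
    (hab : ∀ x ∈ Set.Icc (0:ℝ) 1, 0 < a * x + b)
    (hf : ∀ x, f x = (a * x + b) * (1 - p x) - k * p x)
    (hx₀ : x₀ ∈ Set.Ioo (0:ℝ) 1)
    (hfoc : x₀ * deriv f x₀ + α * f x₀ = 0)
    (hfx₀ : 0 < f x₀)
    (hybar_mem : ybar ∈ Set.Ioc x₀ 1)
    (hybar : f ybar = 0) :
    ybar < x₀ * (1 + 2 / α) := by
  have hx : x₀ ∈ Icc (0:ℝ) 1 := Ioo_subset_Icc_self hx₀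
  have hy : ybar ∈ Icc (0:ℝ) 1 := ⟨hx₀.1.le.trans hybar_mem.1.le, hybar_mem.2⟩
  rw [(hasDerivAt_of_eq_affine_mul_one_sub hf (hp_diff x₀ hx)).deriv] at hfoc
  have htangent := mul_tangent_increment_le hf ha hk hybar_mem.1.le (hab ybar hy) hybar
    (hp_conv.deriv_mul_sub_le hx hy hybar_mem.1 (hp_diff x₀ hx))
  have hslope_a := neg_mul_sub_mul_one_sub_lt hf hk (hab ybar hy) hybar
    (hp_mono hx hy hybar_mem.1)
  have hweighted : α * f x₀ * (ybar - x₀) < 2 * x₀ * f x₀ := by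
    have hsplit : α * f x₀ * (ybar - x₀) = x₀ * ((a * x₀ + b + k) * (deriv p x₀ * (ybar - x₀)))
        + x₀ * (-a * (ybar - x₀) * (1 - p x₀)) := by
      linear_combination (ybar - x₀) * hfoc
    linarith [mul_le_mul_of_nonneg_left htangent hx₀.1.le, mul_lt_mul_of_pos_left hslope_a hx₀.1]
  have hgap : ybar - x₀ < 2 * x₀ / α := by
    rw [lt_div_iff₀ hα.1]
    exact lt_of_mul_lt_mul_right (by linarith) hfx₀.le
  calc ybar < x₀ + 2 * x₀ / α := by linarith
    _ = x₀ * (1 + 2 / α) := by ring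

theorem stmt6 (p f : ℝ → ℝ) (α k a b x₀ ybar : ℝ)
    (hp_conv : ConvexOn ℝ (Set.Icc 0 1) p)
    (hp_mono : StrictMonoOn p (Set.Icc 0 1))
    (hp_diff : ∀ x ∈ Set.Icc (0:ℝ) 1, DifferentiableAt ℝ p x)
    (hp_range : ∀ x ∈ Set.Icc (0:ℝ) 1, p x ∈ Set.Icc (0:ℝ) 1)
    (hp1 : p 1 = 1)
    (hα : α ∈ Set.Ioc (0:ℝ) 1) (hk : 0 ≤ k) (ha : a ≤ 0) (hb : 0 < b)
    (hab : ∀ x ∈ Set.Icc (0:ℝ) 1, 0 < a * x + b)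
    (hf : ∀ x, f x = (a * x + b) * (1 - p x) - k * p x)
    (hx₀ : x₀ ∈ Set.Ioo (0:ℝ) 1)
    (hfoc : x₀ * deriv f x₀ + α * f x₀ = 0)
    (hfx₀ : 0 < f x₀)
    (hybar_mem : ybar ∈ Set.Ioc x₀ 1)
    (hybar : f ybar = 0)
    (hfpos : ∀ x ∈ Set.Ico x₀ ybar, 0 < f x) :
    ybar < x₀ * (1 + 2 / α) :=
  stmt6_general p f α k a b x₀ ybar hp_conv hp_mono hp_diff hα hk ha hab hf hx₀ hfoc hfx₀ hybar_mem
    hybar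
end

section
/- Let p:[0,1]→[0,1] be convex, strictly increasing, differentiable, with p(0)=0 and p(1)=1, let α ∈ (0,1], k ≥ 0, a ≥ 0, b > 0. Define f(x) = (a·x+b)(1-p(x)) - k·p(x). If x₀ ∈ (0,1) satisfies x₀·f'(x₀) + α·f(x₀) = 0 and x₀·(1+1/α) < 1, then f(x₀·(1+1/α)) ≤ 0. Consequently, if ȳ denotes the smallest zero of f exceeding x₀, then ȳ ≤ x₀·(1+1/α). -/
/-!
The function `f = (a x + b) (1 - p) - k p` is concave on `[0, 1]`: a nonnegative increasing affine
factor times the nonnegative decreasing concave function `1 - p`, minus a convex term. By the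
first-order condition its tangent line at `x₀` has slope `-α f(x₀) / x₀`, so the tangent vanishes
exactly at `x₀ (1 + 1/α)`, and concavity puts `f` below the tangent there. Evaluated at `0`, the same
tangent gives `b = f(0) ≤ (1 + α) f(x₀)`, so `f(x₀) > 0`, and the intermediate value theorem yields a
zero of `f` in `(x₀, x₀ (1 + 1/α)]`.
-/

open Set

lemma ConcaveOn.le_add_deriv_mul_sub {S : Set ℝ} {f : ℝ → ℝ} {x y : ℝ} (hf : ConcaveOn ℝ S f)
    (hx : x ∈ S) (hy : y ∈ S) (hfx : DifferentiableAt ℝ f x) :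
    f y ≤ f x + deriv f x * (y - x) := by
  rcases lt_trichotomy x y with hxy | rfl | hyx
  · have h := hf.slope_le_deriv hx hy hxy hfx
    rw [slope_def_field, div_le_iff₀ (sub_pos.2 hxy)] at h
    linarith
  · simp
  · have h := hf.deriv_le_slope hy hx hyx hfx
    rw [slope_def_field, le_div_iff₀ (sub_pos.2 hyx)] at h
    linarith

section FirstOrderCondition

variable {S : Set ℝ} {f : ℝ → ℝ} {α x₀ : ℝ}

lemma ConcaveOn.apply_mul_one_add_inv_nonpos (hf : ConcaveOn ℝ S f) (hx₀ : x₀ ∈ S)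
    (hy : x₀ * (1 + 1 / α) ∈ S) (hα : 0 < α) (hfx₀ : DifferentiableAt ℝ f x₀)
    (hfoc : x₀ * deriv f x₀ + α * f x₀ = 0) :
    f (x₀ * (1 + 1 / α)) ≤ 0 := by
  have htangent := hf.le_add_deriv_mul_sub hx₀ hy hfx₀
  have hzero : f x₀ + deriv f x₀ * (x₀ * (1 + 1 / α) - x₀) = 0 := by
    field_simp
    linarith
  linarith

lemma ConcaveOn.apply_pos_of_apply_zero_pos (hf : ConcaveOn ℝ S f) (h0 : (0 : ℝ) ∈ S)
    (hx₀ : x₀ ∈ S) (hα : 0 < α) (hfx₀ : DifferentiableAt ℝ f x₀)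
    (hfoc : x₀ * deriv f x₀ + α * f x₀ = 0) (hf0 : 0 < f 0) :
    0 < f x₀ := by
  have hbound : f 0 ≤ (1 + α) * f x₀ := by linarith [hf.le_add_deriv_mul_sub hx₀ h0 hfx₀]
  exact pos_of_mul_pos_right (hf0.trans_le hbound) (by linarith)

end FirstOrderCondition

lemma exists_zero_mem_Ioc_of_pos_of_nonpos {f : ℝ → ℝ} {x y : ℝ} (hxy : x ≤ y)
    (hf : ContinuousOn f (Icc x y)) (hfx : 0 < f x) (hfy : f y ≤ 0) :
    ∃ z ∈ Ioc x y, f z = 0 := by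
  obtain ⟨z, ⟨hxz, hzy⟩, hfz⟩ := intermediate_value_Icc' hxy hf ⟨hfy, hfx.le⟩
  refine ⟨z, ⟨lt_of_le_of_ne hxz ?_, hzy⟩, hfz⟩
  rintro rfl
  exact hfx.ne' hfz

lemma concaveOn_affine_mul_one_sub_sub_mul {p : ℝ → ℝ} {a b k : ℝ}
    (hp_conv : ConvexOn ℝ (Icc 0 1) p) (hp_mono : MonotoneOn p (Icc 0 1))
    (hp_le : ∀ x ∈ Icc (0 : ℝ) 1, p x ≤ 1) (ha : 0 ≤ a) (hb : 0 ≤ b) (hk : 0 ≤ k) :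
    ConcaveOn ℝ (Icc 0 1) fun x => (a * x + b) * (1 - p x) - k * p x := by
  have haffine : ConcaveOn ℝ (Icc (0 : ℝ) 1) fun x => a * x + b :=
    (concaveOn_id (convex_Icc 0 1)).smul ha |>.add_const b
  have hone_sub : ConcaveOn ℝ (Icc (0 : ℝ) 1) fun x => 1 - p x :=
    (concaveOn_const 1 (convex_Icc 0 1)).sub hp_conv
  have hanti : AntivaryOn (fun x => a * x + b) (fun x => 1 - p x) (Icc 0 1) := by
    intro i hi j hj hij
    have hji : j ≤ i := by
      by_contra! h
      linarith [hp_mono hi hj h.le]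
    dsimp only
    gcongr
  have hprod := haffine.mul hone_sub (fun x hx => add_nonneg (mul_nonneg ha hx.1) hb)
    (fun x hx => sub_nonneg.2 (hp_le x hx)) hanti
  exact hprod.sub (hp_conv.smul hk)

theorem stmt11_general (p f : ℝ → ℝ) (α k a b x₀ : ℝ)
    (hp_conv : ConvexOn ℝ (Set.Icc 0 1) p)
    (hp_mono : StrictMonoOn p (Set.Icc 0 1))
    (hp_diff : ∀ x ∈ Set.Icc (0:ℝ) 1, DifferentiableAt ℝ p x)
    (hp_range : ∀ x ∈ Set.Icc (0:ℝ) 1, p x ∈ Set.Icc (0:ℝ) 1)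
    (hp0 : p 0 = 0)
    (hα : α ∈ Set.Ioc (0:ℝ) 1) (hk : 0 ≤ k) (ha : 0 ≤ a) (hb : 0 < b)
    (hf : ∀ x, f x = (a * x + b) * (1 - p x) - k * p x)
    (hx₀ : x₀ ∈ Set.Ioo (0:ℝ) 1)
    (hfoc : x₀ * deriv f x₀ + α * f x₀ = 0)
    (hsmall : x₀ * (1 + 1 / α) < 1) :
    f (x₀ * (1 + 1 / α)) ≤ 0 ∧
      ∀ ybar, x₀ < ybar → f ybar = 0 → (∀ z, x₀ < z → f z = 0 → ybar ≤ z) →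
        ybar ≤ x₀ * (1 + 1 / α) := by
  obtain rfl : f = fun x => (a * x + b) * (1 - p x) - k * p x := funext hf
  have hconc := concaveOn_affine_mul_one_sub_sub_mul hp_conv hp_mono.monotoneOn
    (fun x hx => (hp_range x hx).2) ha hb.le hk
  have hdiff : ∀ x ∈ Icc (0 : ℝ) 1,
      DifferentiableAt ℝ (fun x => (a * x + b) * (1 - p x) - k * p x) x := fun x hx => by
    have := hp_diff x hx
    fun_prop
  have hx₀_mem : x₀ ∈ Icc (0 : ℝ) 1 := Ioo_subset_Icc_self hx₀
  have hx₀_lt : x₀ < x₀ * (1 + 1 / α) := by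
    have := div_pos hx₀.1 hα.1
    rw [mul_one_add, mul_one_div]
    linarith
  have hy_mem : x₀ * (1 + 1 / α) ∈ Icc (0 : ℝ) 1 := ⟨hx₀.1.le.trans hx₀_lt.le, hsmall.le⟩
  have hy_nonpos := hconc.apply_mul_one_add_inv_nonpos hx₀_mem hy_mem hα.1 (hdiff x₀ hx₀_mem) hfoc
  have hx₀_pos := hconc.apply_pos_of_apply_zero_pos (left_mem_Icc.2 zero_le_one) hx₀_mem hα.1
    (hdiff x₀ hx₀_mem) hfoc (by simpa [hp0] using hb)
  refine ⟨hy_nonpos, fun ybar _ _ hybar_le => ?_⟩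
  obtain ⟨z, hz, hfz⟩ := exists_zero_mem_Ioc_of_pos_of_nonpos hx₀_lt.le
    (fun x hx => (hdiff x (Icc_subset_Icc hx₀_mem.1 hy_mem.2 hx)).continuousAt.continuousWithinAt)
    hx₀_pos hy_nonpos
  exact (hybar_le z hz.1 hfz).trans hz.2

theorem stmt11 (p f : ℝ → ℝ) (α k a b x₀ : ℝ)
    (hp_conv : ConvexOn ℝ (Set.Icc 0 1) p)
    (hp_mono : StrictMonoOn p (Set.Icc 0 1))
    (hp_diff : ∀ x ∈ Set.Icc (0:ℝ) 1, DifferentiableAt ℝ p x)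
    (hp_range : ∀ x ∈ Set.Icc (0:ℝ) 1, p x ∈ Set.Icc (0:ℝ) 1)
    (hp0 : p 0 = 0) (hp1 : p 1 = 1)
    (hα : α ∈ Set.Ioc (0:ℝ) 1) (hk : 0 ≤ k) (ha : 0 ≤ a) (hb : 0 < b)
    (hf : ∀ x, f x = (a * x + b) * (1 - p x) - k * p x)
    (hx₀ : x₀ ∈ Set.Ioo (0:ℝ) 1)
    (hfoc : x₀ * deriv f x₀ + α * f x₀ = 0)
    (hsmall : x₀ * (1 + 1 / α) < 1) :
    f (x₀ * (1 + 1 / α)) ≤ 0 ∧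
      ∀ ybar, x₀ < ybar → f ybar = 0 → (∀ z, x₀ < z → f z = 0 → ybar ≤ z) →
        ybar ≤ x₀ * (1 + 1 / α) :=
  stmt11_general p f α k a b x₀ hp_conv hp_mono hp_diff hp_range hp0 hα hk ha hb hf hx₀ hfoc hsmall
end

section
/- Let b > 0, k ≥ 0, α ∈ (0,1], γ ≥ 1, and n ≥ 1. The equation (x)^γ·(γ/n + α) = α·b^α/(b^α + k) has a unique solution x_n ∈ (0,1), and the ratio (x_n)^γ/(x_1)^γ equals (γ+α)/(α + γ/n); in particular this ratio is increasing in n and converges to 1 + γ/α as n → ∞. -/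
/-!
The equilibrium condition determines `x_n ^ γ` explicitly as `C / (α + γ / n)` with
`C = α b^α / (b^α + k) ≤ α < α + γ / n`, so `x_n` is the `γ`-th root of a number in `(0, 1)`.
The ratio `x_n^γ / x_1^γ` is then a quotient of the two denominators, and its monotonicity and
limit come from `γ / n` decreasing to `0`.
-/

open Filter Set Topology

lemma existsUnique_mem_Ioo_rpow_mul_eq {γ A C : ℝ} (hγ : 0 < γ) (hC : 0 < C) (hCA : C < A) :
    ∃! x : ℝ, x ∈ Ioo (0 : ℝ) 1 ∧ x ^ γ * A = C := by
  have hA : 0 < A := hC.trans hCA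
  have hr : 0 < C / A := div_pos hC hA
  refine ⟨(C / A) ^ γ⁻¹, ⟨⟨Real.rpow_pos_of_pos hr _, ?_⟩, ?_⟩, ?_⟩
  · exact Real.rpow_lt_one hr.le ((div_lt_one hA).mpr hCA) (inv_pos.mpr hγ)
  · rw [Real.rpow_inv_rpow hr.le hγ.ne', div_mul_cancel₀ _ hA.ne']
  · rintro y ⟨hy, hyC⟩
    rw [← eq_div_iff hA.ne'] at hyC
    rw [← hyC, Real.rpow_rpow_inv hy.1.le hγ.ne']

lemma div_eq_div_of_mul_eq_of_mul_eq {K : Type*} [Field K] {a b A B C : K}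
    (hA : A ≠ 0) (hB : B ≠ 0) (hC : C ≠ 0) (ha : a * A = C) (hb : b * B = C) :
    a / b = B / A := by
  rw [← eq_div_iff hA] at ha
  rw [← eq_div_iff hB] at hb
  rw [ha, hb, div_div_div_cancel_left' _ _ hC]

lemma monotoneOn_div_add_div_natCast {c α γ : ℝ} (hc : 0 ≤ c) (hα : 0 < α) (hγ : 0 ≤ γ) :
    MonotoneOn (fun n : ℕ => c / (α + γ / n)) {n : ℕ | 1 ≤ n} := by
  intro m hm n _ hmn
  have hm0 : (0 : ℝ) < m := by exact_mod_cast hm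
  have hγnm : γ / n ≤ γ / m := div_le_div_of_nonneg_left hγ hm0 (by exact_mod_cast hmn)
  exact div_le_div_of_nonneg_left hc (by positivity) (by linarith)

lemma tendsto_div_add_div_natCast_atTop (c γ : ℝ) {α : ℝ} (hα : α ≠ 0) :
    Tendsto (fun n : ℕ => c / (α + γ / n)) atTop (𝓝 (c / α)) := by
  have hγn : Tendsto (fun n : ℕ => α + γ / n) atTop (𝓝 α) := by
    simpa using (tendsto_natCast_atTop_atTop.const_div_atTop γ).const_add α
  exact tendsto_const_nhds.div hγn hα

theorem stmt12 (b k α γ : ℝ)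
    (hb : 0 < b) (hk : 0 ≤ k) (hα : α ∈ Set.Ioc (0:ℝ) 1) (hγ : 1 ≤ γ) :
    (∀ n : ℕ, 1 ≤ n →
      ∃! x : ℝ, x ∈ Set.Ioo (0:ℝ) 1 ∧
        x ^ γ * (γ / (n : ℝ) + α) = α * b ^ α / (b ^ α + k)) ∧
    (∀ n : ℕ, 1 ≤ n → ∀ xn x1 : ℝ,
      xn ∈ Set.Ioo (0:ℝ) 1 → x1 ∈ Set.Ioo (0:ℝ) 1 →
      xn ^ γ * (γ / (n : ℝ) + α) = α * b ^ α / (b ^ α + k) →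
      x1 ^ γ * (γ / (1 : ℝ) + α) = α * b ^ α / (b ^ α + k) →
      xn ^ γ / x1 ^ γ = (γ + α) / (α + γ / (n : ℝ))) ∧
    MonotoneOn (fun n : ℕ => (γ + α) / (α + γ / (n : ℝ))) {n : ℕ | 1 ≤ n} ∧
    Filter.Tendsto (fun n : ℕ => (γ + α) / (α + γ / (n : ℝ))) Filter.atTop
      (nhds (1 + γ / α)) := by
  have hα0 : 0 < α := hα.1
  have hγ0 : 0 < γ := one_pos.trans_le hγ
  have hbα : 0 < b ^ α := Real.rpow_pos_of_pos hb α
  have hC : 0 < α * b ^ α / (b ^ α + k) := by positivity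
  have hCα : α * b ^ α / (b ^ α + k) ≤ α :=
    (div_le_iff₀ (by positivity)).mpr (by nlinarith)
  refine ⟨fun n hn => ?_, fun n hn xn x1 _ _ hxn hx1 => ?_,
    monotoneOn_div_add_div_natCast (by positivity) hα0 hγ0.le, ?_⟩
  · have : 0 < γ / (n : ℝ) := div_pos hγ0 (by exact_mod_cast hn)
    exact existsUnique_mem_Ioo_rpow_mul_eq hγ0 hC (by linarith)
  · have hn0 : (0 : ℝ) < n := by exact_mod_cast hn
    rw [div_eq_div_of_mul_eq_of_mul_eq (by positivity) (by positivity) hC.ne' hxn hx1,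
      div_one, add_comm (γ / (n : ℝ))]
  · convert tendsto_div_add_div_natCast_atTop (γ + α) γ hα0.ne' using 2
    field_simp
    ring
end

section
/- Let f:[0,1]→ℝ be differentiable, α ∈ (0,1], n ≥ 1, and consider the social welfare Ψ(x₁,…,x_n) = (Σᵢ xᵢ^α)·f(Σᵢ xᵢ) over nonnegative xᵢ. For a fixed total x_T > 0, the sum Σᵢ xᵢ^α subject to Σᵢ xᵢ = x_T, xᵢ ≥ 0, is maximized at xᵢ = x_T/n for all i (by concavity of t ↦ t^α). Moreover, at any interior critical point of Ψ with all xᵢ = x_T/n > 0, the total x_T satisfies x_T·f'(x_T) + α·f(x_T) = 0, the same equation as the single-player optimality condition. -/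
/-! Jensen's inequality for the concave map `t ↦ t ^ α` bounds `∑ xᵢ ^ α` by its value at the
equal split. At the symmetric point `t₀ = x_T / n`, the derivative in one coordinate equals
`t₀ ^ α / t₀ · (α f(x_T) + n t₀ f'(x_T))`, and `n t₀ = x_T` turns the vanishing of the second
factor into the single-player condition. -/

open Finset

theorem ConcaveOn.sum_le_card_mul_map_average {ι : Type*} [Fintype ι] [Nonempty ι]
    {s : Set ℝ} {g : ℝ → ℝ} (hg : ConcaveOn ℝ s g) {x : ι → ℝ} (hx : ∀ i, x i ∈ s) :
    ∑ i, g (x i) ≤ Fintype.card ι * g ((∑ i, x i) / Fintype.card ι) := by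
  have hcard : (0 : ℝ) < Fintype.card ι := by exact_mod_cast Fintype.card_pos
  have hJensen := hg.le_map_sum (t := univ) (w := fun _ => (Fintype.card ι : ℝ)⁻¹) (p := x)
    (fun _ _ => by positivity) (by simp [hcard.ne']) (fun i _ => hx i)
  simp only [smul_eq_mul, ← mul_sum] at hJensen
  rw [inv_mul_eq_div, inv_mul_eq_div, div_le_iff₀' hcard] at hJensen
  exact hJensen

theorem Real.sum_rpow_le_card_mul_rpow_average {ι : Type*} [Fintype ι] [Nonempty ι]
    {α : ℝ} (hα₀ : 0 ≤ α) (hα₁ : α ≤ 1) {x : ι → ℝ} (hx : ∀ i, 0 ≤ x i) :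
    ∑ i, x i ^ α ≤ Fintype.card ι * ((∑ i, x i) / Fintype.card ι) ^ α :=
  (Real.concaveOn_rpow hα₀ hα₁).sum_le_card_mul_map_average hx

theorem hasDerivAt_rpow_add_mul_comp_add {f : ℝ → ℝ} {α a b t : ℝ} (ht : t ≠ 0)
    (hf : DifferentiableAt ℝ f (t + b)) :
    HasDerivAt (fun s => (s ^ α + a) * f (s + b))
      (α * t ^ (α - 1) * f (t + b) + (t ^ α + a) * deriv f (t + b)) t :=
  ((Real.hasDerivAt_rpow_const (Or.inl ht)).add_const a).mul
    (hf.hasDerivAt.comp_add_const t b)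

theorem stmt16 (f : ℝ → ℝ) (α xT : ℝ) (n : ℕ)
    (hf : Differentiable ℝ f)
    (hα : α ∈ Set.Ioc (0:ℝ) 1) (hn : 1 ≤ n) (hxT : 0 < xT) :
    (∀ x : Fin n → ℝ, (∀ i, 0 ≤ x i) → (∑ i, x i) = xT →
      ∑ i, (x i) ^ α ≤ (n : ℝ) * (xT / (n : ℝ)) ^ α) ∧
    ((deriv (fun t : ℝ =>
        (t ^ α + ((n : ℝ) - 1) * (xT / (n : ℝ)) ^ α) *
          f (t + ((n : ℝ) - 1) * (xT / (n : ℝ)))) (xT / (n : ℝ)) = 0) →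
      xT * deriv f xT + α * f xT = 0) := by
  have hn₀ : (0 : ℝ) < n := by exact_mod_cast hn
  have : Nonempty (Fin n) := ⟨⟨0, hn⟩⟩
  refine ⟨fun x hx hsum => ?_, fun hcrit => ?_⟩
  · simpa [hsum] using Real.sum_rpow_le_card_mul_rpow_average hα.1.le hα.2 hx
  · set t₀ := xT / (n : ℝ)
    have ht₀ : 0 < t₀ := div_pos hxT hn₀
    have htotal : t₀ + ((n : ℝ) - 1) * t₀ = xT := by simp only [t₀]; field_simp; ring
    rw [(hasDerivAt_rpow_add_mul_comp_add ht₀.ne' (hf _)).deriv, htotal,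
      Real.rpow_sub_one ht₀.ne'] at hcrit
    have hfactor : t₀ ^ α / t₀ * (xT * deriv f xT + α * f xT) = 0 := by
      rw [← hcrit, ← htotal]; field_simp; ring
    exact (mul_eq_zero.1 hfactor).resolve_left (by positivity)
end
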